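/- Let A be a proper connective dg algebra and d ≥ 1. The extriangulated category per(A)^{[-d,0]} is (d-1)-Auslander: it has enough projectives, enough injectives, positive global dimension at most d, and dominant dimension at least d; for each projective P ∈ add(A), a minimal injective coresolution is given by the conflations P ↣ 0 ↠ P[1], P[1] ↣ 0 ↠ P[2], ..., P[d-1] ↣ 0 ↠ P[d], P[d] ↣ P[d] ↠ 0, whose first d terms are projective-injective. -/

import Mathlib

/-!
Every object of `per(A)^{[-n,0]}` lies in the aisle `t.le 0` and has projective dimension at
most `n` relative to it (`Hom(X, Z⟦j⟧) = 0` for `Z ∈ t.le 0`, `j > n`), because both properties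
are closed under extensions and hold for `add A⟦i⟧`, `i ≤ n`. This bounds the global dimension
and makes `P⟦d⟧` injective. Conversely, an object of the aisle of projective dimension at most `n`
lies in `per(A)^{[-n,0]}`: iterating `add A`-approximations (which exist because Hom-spaces are
finite dimensional) gives a map `X ⟶ N⟦n⟧` with `N ∈ add A` through which every `X ⟶ Z⟦n⟧`
factors, and its fiber has projective dimension at most `n - 1`. Hence the fiber of an
`add A`-approximation of `X ∈ per(A)^{[-d,0]}` stays in `per(A)^{[-d,0]}` (enough projectives),
while enough injectives comes from the last step `X₁ ⟶ X ⟶ Q` of the defining filtration, rotated,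
since `per(A)^{[-(d-1),0]}⟦1⟧ ⊆ per(A)^{[-d,0]}`.
-/

open CategoryTheory Category Limits Pretriangulated Triangulated ZeroObject

universe w v u

namespace Paper

section Defs

variable {C : Type u} [Category.{v} C] [Preadditive C] [HasZeroObject C]
  [HasShift C ℤ] [∀ n : ℤ, (shiftFunctor C n).Additive] [Pretriangulated C]
  [HasFiniteBiproducts C] [HasBinaryBiproducts C]

/-- `X` lies in `add A`: it is a direct summand of a finite direct sum of copies of `A`. -/
def inAdd (A X : C) : Prop :=
  ∃ (n : ℕ) (s : X ⟶ ⨁ fun _ : Fin n => A) (p : (⨁ fun _ : Fin n => A) ⟶ X), s ≫ p = 𝟙 X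

/-- The star operation `S ∗ T` on classes of objects of a (pre)triangulated category:
objects `E` admitting a distinguished triangle `X ⟶ E ⟶ Y ⟶ X⟦1⟧` with `X ∈ S`, `Y ∈ T`. -/
def star (S T : Set C) : Set C :=
  {E | ∃ (X : C) (_ : X ∈ S) (Y : C) (_ : Y ∈ T) (f : X ⟶ E) (g : E ⟶ Y)
    (h : Y ⟶ X⟦(1 : ℤ)⟧), Triangle.mk f g h ∈ distTriang C}

/-- `add (A⟦i⟧)` as a class of objects. -/
def addShift (A : C) (i : ℤ) : Set C := {X | inAdd (A⟦i⟧) X}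

/-- `per(A)^{[-n,0]} = add(A) ∗ add(A)[1] ∗ ⋯ ∗ add(A)[n]`. -/
def perInterval (A : C) : ℕ → Set C
  | 0 => addShift A 0
  | n + 1 => star (perInterval A n) (addShift A (n + 1))

/-- `thick(DA)^{[0,n]} = add(DA)[-n] ∗ ⋯ ∗ add(DA)[-1] ∗ add(DA)`. -/
def coInterval (DA : C) : ℕ → Set C
  | 0 => addShift DA 0
  | n + 1 => star (addShift DA (-(n + 1 : ℕ))) (coInterval DA n)

/-- The extended heart `H^d = T^{≤ 0} ∩ T^{> -d}`. -/
def Hd (t : TStructure C) (d : ℕ) : Set C := {X | t.le 0 X ∧ t.ge (1 - (d : ℤ)) X}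

/-- Projectivity in the extriangulated category given by an extension-closed class `S`:
`E(P, X) = Hom(P, X⟦1⟧)` vanishes for all `X ∈ S`. -/
def projOn (S : Set C) (P : C) : Prop := ∀ X ∈ S, ∀ f : P ⟶ X⟦(1 : ℤ)⟧, f = 0

/-- Injectivity in the extriangulated category given by an extension-closed class `S`. -/
def injOn (S : Set C) (I : C) : Prop := ∀ X ∈ S, ∀ f : X ⟶ I⟦(1 : ℤ)⟧, f = 0

/-- `p : M ⟶ N` is a deflation for the extriangulated structure on the extension-closed
class `S`: it is the second map of a distinguished triangle with all terms in `S`. -/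
def isDeflation (S : Set C) {M N : C} (p : M ⟶ N) : Prop :=
  ∃ (L : C) (_ : L ∈ S) (f : L ⟶ M) (h : N ⟶ L⟦(1 : ℤ)⟧),
    Triangle.mk f p h ∈ distTriang C

/-- `i : L ⟶ M` is an inflation for the extriangulated structure on `S`. -/
def isInflation (S : Set C) {L M : C} (i : L ⟶ M) : Prop :=
  ∃ (N : C) (_ : N ∈ S) (p : M ⟶ N) (h : N ⟶ L⟦(1 : ℤ)⟧),
    Triangle.mk i p h ∈ distTriang C

/-- `f` factors through an object of `add W`. -/
def factorsThruAdd (W : C) {X Y : C} (f : X ⟶ Y) : Prop :=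
  ∃ (Q : C) (_ : inAdd W Q) (a : X ⟶ Q) (b : Q ⟶ Y), f = a ≫ b

/-- An indecomposable object: nonzero, and in any direct sum decomposition one summand
vanishes. -/
def Indec (X : C) : Prop :=
  ¬ IsZero X ∧ ∀ Y Z : C, Nonempty (X ≅ Y ⊞ Z) → IsZero Y ∨ IsZero Z

/-- Data of the truncation functor `t^{≥ n}`, left adjoint to the inclusion of `T^{≥ n}`,
together with its unit and the truncation triangles. -/
structure TruncGEData (t : TStructure C) (n : ℤ) where
  F : C ⥤ C
  η : 𝟭 C ⟶ F
  ge : ∀ X : C, t.ge n (F.obj X)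
  tri : ∀ X : C, ∃ (Z : C) (_ : t.le (n - 1) Z) (f : Z ⟶ X) (h : F.obj X ⟶ Z⟦(1 : ℤ)⟧),
    Triangle.mk f (η.app X) h ∈ distTriang C
  adj : ∀ (X W : C), t.ge n W → Function.Bijective (fun g : F.obj X ⟶ W => η.app X ≫ g)

/-- Data of the truncation functor `t^{≤ n}`, right adjoint to the inclusion of `T^{≤ n}`,
together with its counit and the truncation triangles. -/
structure TruncLEData (t : TStructure C) (n : ℤ) where
  F : C ⥤ C
  ε : F ⟶ 𝟭 C
  le : ∀ X : C, t.le n (F.obj X)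
  tri : ∀ X : C, ∃ (Z : C) (_ : t.ge (n + 1) Z) (g : X ⟶ Z) (h : Z ⟶ (F.obj X)⟦(1 : ℤ)⟧),
    Triangle.mk (ε.app X) g h ∈ distTriang C
  adj : ∀ (W X : C), t.le n W → Function.Bijective (fun g : W ⟶ F.obj X => g ≫ ε.app X)

/-- Membership in the thick subcategory generated by `A`. -/
inductive thickMem (A : C) : C → Prop
  | base : thickMem A A
  | zero : thickMem A 0
  | iso {X Y : C} : (X ≅ Y) → thickMem A X → thickMem A Y
  | shift (X : C) (n : ℤ) : thickMem A X → thickMem A (X⟦n⟧)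
  | ext₂ {X Y Z : C} {f : X ⟶ Y} {g : Y ⟶ Z} {h : Z ⟶ X⟦(1 : ℤ)⟧} :
      (Triangle.mk f g h ∈ distTriang C) → thickMem A X → thickMem A Z → thickMem A Y
  | smd {X Y : C} (s : X ⟶ Y) (p : Y ⟶ X) : s ≫ p = 𝟙 X → thickMem A Y → thickMem A X

end Defs

/-- Abstraction of the derived category `D^fd(A)` of a proper connective dg algebra `A`
over a field `k`, with its standard t-structure: `A` is connective (cohomology in
non-positive degrees), Hom-spaces are finite dimensional (properness), the standard
t-structure is bounded on `D^fd`, `A` is derived projective and `A` generates. -/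
structure DGSetup (k : Type w) [Field k] (C : Type u) [Category.{v} C] [Preadditive C]
    [HasZeroObject C] [HasShift C ℤ] [∀ n : ℤ, (shiftFunctor C n).Additive]
    [Pretriangulated C] [Linear k C] where
  t : TStructure C
  A : C
  connective : t.le 0 A
  homFinite : ∀ X Y : C, FiniteDimensional k (X ⟶ Y)
  bounded : ∀ X : C, ∃ a b : ℤ, t.ge a X ∧ t.le b X
  A_derived_projective : ∀ X : C, t.le 0 X → ∀ f : A ⟶ X⟦(1 : ℤ)⟧, f = 0
  generates : ∀ X : C, (∀ (n : ℤ) (f : A⟦n⟧ ⟶ X), f = 0) → IsZero X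

section DG

variable {k : Type w} [Field k] {C : Type u} [Category.{v} C] [Preadditive C]
  [HasZeroObject C] [HasShift C ℤ] [∀ n : ℤ, (shiftFunctor C n).Additive]
  [Pretriangulated C] [Linear k C]

/-- A derived injective object of `D^fd(A)^{≥ 0}`. -/
def DerivedInjective (S : DGSetup k C) (I : C) : Prop :=
  S.t.ge 0 I ∧ ∀ X : C, S.t.ge 0 X → ∀ f : X ⟶ I⟦(1 : ℤ)⟧, f = 0

variable [HasFiniteBiproducts C] [HasBinaryBiproducts C]

/-- The `k`-submodule of morphisms `X ⟶ Y` factoring through `add W`. -/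
def addIdeal (k : Type w) [Field k] [Linear k C] (W : C) (X Y : C) : Submodule k (X ⟶ Y) :=
  Submodule.span k {f | factorsThruAdd W f}

end DG

section Additive

variable {C : Type u} [Category.{v} C] [Preadditive C]

lemma hom_eq_zero_of_iso {X Y Y' : C} (e : Y' ≅ Y) (h : ∀ g : X ⟶ Y, g = 0) (f : X ⟶ Y') :
    f = 0 :=
  (Preadditive.IsIso.comp_right_eq_zero f e.hom).1 (h _)

lemma shift_hom_eq_zero [HasShift C ℤ] [∀ n : ℤ, (shiftFunctor C n).Additive] {X Y : C} (a : ℤ)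
    (h : ∀ g : X ⟶ Y, g = 0) (f : X⟦a⟧ ⟶ Y⟦a⟧) : f = 0 := by
  rw [← (shiftFunctor C a).map_preimage f, h ((shiftFunctor C a).preimage f), Functor.map_zero]

variable [HasFiniteBiproducts C]

lemma inAdd_zero [HasZeroObject C] (W : C) : inAdd W 0 :=
  ⟨0, 0, 0, (isZero_zero C).eq_of_src _ _⟩

lemma inAdd_biproduct (W : C) (n : ℕ) : inAdd W (⨁ fun _ : Fin n => W) :=
  ⟨n, 𝟙 _, 𝟙 _, id_comp _⟩

lemma inAdd.of_retract {W X Y : C} (hY : inAdd W Y) (s : X ⟶ Y) (p : Y ⟶ X)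
    (hsp : s ≫ p = 𝟙 X) : inAdd W X := by
  obtain ⟨n, s', p', h⟩ := hY
  exact ⟨n, s ≫ s', p' ≫ p, by rw [assoc, reassoc_of% h, hsp]⟩

lemma inAdd.of_iso {W W' X : C} (h : inAdd W X) (e : W ≅ W') : inAdd W' X := by
  obtain ⟨n, s, p, hsp⟩ := h
  let E := biproduct.mapIso fun _ : Fin n => e
  exact ⟨n, s ≫ E.hom, E.inv ≫ p, by simp [hsp]⟩

lemma inAdd.map {D : Type*} [Category D] [Preadditive D] [HasFiniteBiproducts D] (F : C ⥤ D)
    [F.Additive] {W X : C} (h : inAdd W X) : inAdd (F.obj W) (F.obj X) := by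
  obtain ⟨n, s, p, hsp⟩ := h
  let E := F.mapBiproduct fun _ : Fin n => W
  exact ⟨n, F.map s ≫ E.hom, E.inv ≫ F.map p, by simp [← F.map_comp, hsp]⟩

lemma inAdd.hom_eq_zero {W X Y : C} (h : inAdd W X) (hW : ∀ g : W ⟶ Y, g = 0)
    (f : X ⟶ Y) : f = 0 := by
  obtain ⟨n, s, p, hsp⟩ := h
  have hp : p ≫ f = 0 := biproduct.hom_ext' _ _ fun j => by simp [hW]
  rw [← id_comp f, ← hsp, assoc, hp, comp_zero]

end Additive

section Pretriangulated

variable {C : Type u} [Category.{v} C] [Preadditive C] [HasZeroObject C]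
  [HasShift C ℤ] [∀ n : ℤ, (shiftFunctor C n).Additive] [Pretriangulated C]

lemma zero_distTriang_of_iso {X Y : C} (e : Y ≅ X⟦(1 : ℤ)⟧) :
    Triangle.mk (0 : X ⟶ 0) (0 : 0 ⟶ Y) e.hom ∈ distTriang C :=
  isomorphic_distinguished _ (contractible_distinguished₂ X) _
    (Triangle.isoMk _ _ (Iso.refl X) (Iso.refl 0) e (zero_comp.trans comp_zero.symm)
      (zero_comp.trans comp_zero.symm) (congrArg (e.hom ≫ ·) ((shiftFunctor C 1).map_id X)))

lemma le_shift_of_le (t : TStructure C) {X : C} {m n : ℤ} (a : ℤ) (hX : t.le m X)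
    (hn : m - a ≤ n) : t.le n (X⟦a⟧) :=
  t.le_monotone hn _ (t.le_shift m a (m - a) (by ring) X hX)

lemma le_of_distTriang (t : TStructure C) {n : ℤ} (T : Triangle C) (hT : T ∈ distTriang C)
    (h₁ : t.le n T.obj₁) (h₃ : t.le n T.obj₃) : t.le n T.obj₂ :=
  (t.isLE₂ T hT n ⟨h₁⟩ ⟨h₃⟩).le

lemma mem_star {S T : Set C} (U : Triangle C) (hU : U ∈ distTriang C) (h₁ : U.obj₁ ∈ S)
    (h₃ : U.obj₃ ∈ T) : U.obj₂ ∈ star S T :=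
  ⟨_, h₁, _, h₃, U.mor₁, U.mor₂, U.mor₃, hU⟩

variable [HasFiniteBiproducts C]

lemma le_of_inAdd (t : TStructure C) {n : ℤ} {W X : C} (hX : inAdd W X) (hW : t.le n W) :
    t.le n X :=
  ((t.isLE_iff_orthogonal n (n + 1) rfl X).2 fun _ f hY =>
    hX.hom_eq_zero (fun g => t.zero_of_isLE_of_isGE g n (n + 1) (by omega) ⟨hW⟩ hY) f).le

lemma perInterval_subset_succ (A : C) (n : ℕ) : perInterval A n ⊆ perInterval A (n + 1) :=
  fun X hX => mem_star _ (contractible_distinguished X) hX (inAdd_zero _)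

lemma perInterval_mono (A : C) : Monotone (perInterval A) :=
  monotone_nat_of_le_succ (perInterval_subset_succ A)

lemma zero_mem_perInterval (A : C) (n : ℕ) : (0 : C) ∈ perInterval A n :=
  perInterval_mono A n.zero_le (inAdd_zero _)

lemma mem_perInterval_of_inAdd_shift (A : C) {X : C} : ∀ {n : ℕ}, inAdd (A⟦(n : ℤ)⟧) X →
    X ∈ perInterval A n
  | 0, hX => hX
  | n + 1, hX => mem_star _ (contractible_distinguished₁ X) (zero_mem_perInterval A n) hX

lemma shift_mem_perInterval_succ (A : C) :
    ∀ (n : ℕ) (X : C), X ∈ perInterval A n → X⟦(1 : ℤ)⟧ ∈ perInterval A (n + 1)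
  | 0, X, hX => mem_perInterval_of_inAdd_shift A
      ((hX.map (shiftFunctor C 1)).of_iso ((shiftFunctorAdd' C 0 1 _ (by simp)).symm.app A))
  | n + 1, X, ⟨X₁, h₁, Q, hQ, _, _, _, hT⟩ =>
      mem_star _ (Triangle.shift_distinguished _ hT 1) (shift_mem_perInterval_succ A n X₁ h₁)
        ((hQ.map (shiftFunctor C 1)).of_iso
          ((shiftFunctorAdd' C _ 1 _ (by push_cast; ring)).symm.app A))

lemma perInterval_induction {A : C} {P : C → Prop} {n : ℕ}
    (hadd : ∀ i : ℕ, i ≤ n → ∀ X, inAdd (A⟦(i : ℤ)⟧) X → P X)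
    (hext : ∀ T ∈ distTriang C, P T.obj₁ → P T.obj₃ → P T.obj₂) :
    ∀ X ∈ perInterval A n, P X := by
  suffices ∀ m ≤ n, ∀ X ∈ perInterval A m, P X from this n le_rfl
  intro m
  induction m with
  | zero => exact hadd 0
  | succ m ih =>
    rintro hm X ⟨X₁, h₁, Q, hQ, _, _, _, hT⟩
    exact hext _ hT (ih (by omega) X₁ h₁) (hadd (m + 1) hm Q hQ)

lemma le_zero_of_mem_perInterval {t : TStructure C} {A : C} (hA : t.le 0 A) (n : ℕ) :
    ∀ X ∈ perInterval A n, t.le 0 X :=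
  perInterval_induction (fun i _ _ hX => le_of_inAdd t hX (le_shift_of_le t _ hA (by omega)))
    (fun T hT => le_of_distTriang t T hT)

lemma exists_inflation (A : C) (n : ℕ) {X : C} (hX : X ∈ perInterval A (n + 1)) :
    ∃ (I : C) (_ : inAdd (A⟦((n + 1 : ℕ) : ℤ)⟧) I) (i : X ⟶ I),
      isInflation (perInterval A (n + 1)) i := by
  obtain ⟨X₁, h₁, Q, hQ, f, g, h, hT⟩ := hX
  exact ⟨Q, hQ, g, X₁⟦(1 : ℤ)⟧, shift_mem_perInterval_succ A n X₁ h₁, h, -f⟦(1 : ℤ)⟧',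
    rot_of_distTriang _ hT⟩

end Pretriangulated

section ProjDim

variable {C : Type u} [Category.{v} C] [Preadditive C] [HasZeroObject C]
  [HasShift C ℤ] [∀ n : ℤ, (shiftFunctor C n).Additive] [Pretriangulated C]
  (t : TStructure C)

/-- Projective dimension at most `n` relative to the aisle `t.le 0`. -/
def ProjDimLE (X : C) (n : ℤ) : Prop :=
  ∀ Z : C, t.le 0 Z → ∀ j : ℤ, n < j → ∀ f : X ⟶ Z⟦j⟧, f = 0

variable {t}

lemma ProjDimLE.mono {X : C} {n m : ℤ} (h : ProjDimLE t X n) (hnm : n ≤ m) :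
    ProjDimLE t X m :=
  fun Z hZ j hj => h Z hZ j (hnm.trans_lt hj)

lemma ProjDimLE.shift {X : C} {n : ℤ} (h : ProjDimLE t X n) (a : ℤ) :
    ProjDimLE t (X⟦a⟧) (n + a) := fun Z hZ j hj =>
  hom_eq_zero_of_iso ((shiftFunctorAdd' C (j - a) a j (by ring)).app Z)
    (shift_hom_eq_zero a (h Z hZ (j - a) (by omega)))

lemma ProjDimLE.of_inAdd [HasFiniteBiproducts C] {W X : C} {n : ℤ} (h : ProjDimLE t W n)
    (hX : inAdd W X) : ProjDimLE t X n :=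
  fun Z hZ j hj => hX.hom_eq_zero (h Z hZ j hj)

lemma ProjDimLE.of_distTriang {n : ℤ} (T : Triangle C) (hT : T ∈ distTriang C)
    (h₁ : ProjDimLE t T.obj₁ n) (h₃ : ProjDimLE t T.obj₃ n) : ProjDimLE t T.obj₂ n := by
  intro Z hZ j hj f
  obtain ⟨g, rfl⟩ := Triangle.yoneda_exact₂ T hT f (h₁ Z hZ j hj _)
  rw [h₃ Z hZ j hj g, comp_zero]

lemma ProjDimLE.fiber {M P X : C} {u : M ⟶ P} {q : P ⟶ X} {e : X ⟶ M⟦(1 : ℤ)⟧}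
    (hT : Triangle.mk u q e ∈ distTriang C) {n : ℤ} (hP : ProjDimLE t P n)
    (hX : ProjDimLE t X (n + 1)) : ProjDimLE t M n :=
  ProjDimLE.of_distTriang _ (inv_rot_of_distTriang _ hT) ((hX.shift (-1)).mono (by omega)) hP

lemma ProjDimLE.fiber_of_factors {Y X W : C} {v : Y ⟶ X} {φ : X ⟶ W} {w : W ⟶ Y⟦(1 : ℤ)⟧}
    (hT : Triangle.mk v φ w ∈ distTriang C) {n : ℤ} (hX : ProjDimLE t X (n + 1))
    (hW : ProjDimLE t (W⟦(-1 : ℤ)⟧) n)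
    (hφ : ∀ Z : C, t.le 0 Z → ∀ f : X ⟶ Z⟦n + 1⟧, ∃ g : W ⟶ Z⟦n + 1⟧, f = φ ≫ g) :
    ProjDimLE t Y n := by
  intro Z hZ j hj f
  obtain ⟨f', rfl⟩ := Triangle.yoneda_exact₂ _ (inv_rot_of_distTriang _ hT) f (hW Z hZ j hj _)
  obtain rfl | hj := (Int.add_one_le_of_lt hj).eq_or_lt
  · obtain ⟨g, rfl⟩ := hφ Z hZ f'
    have hvφ : v ≫ φ = 0 := comp_distTriang_mor_zero₁₂ _ hT
    exact (assoc v φ g).symm.trans (by rw [hvφ, zero_comp])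
  · exact (congrArg (v ≫ ·) (hX Z hZ j hj f')).trans comp_zero

end ProjDim

namespace DGSetup

variable {k : Type w} [Field k] {C : Type u} [Category.{v} C] [Preadditive C]
  [HasZeroObject C] [HasShift C ℤ] [∀ n : ℤ, (shiftFunctor C n).Additive]
  [Pretriangulated C] [Linear k C] (S : DGSetup k C)

lemma hom_shift_eq_zero {Z : C} {m j : ℤ} (hZ : S.t.le m Z) (hmj : m < j)
    (f : S.A ⟶ Z⟦j⟧) : f = 0 :=
  hom_eq_zero_of_iso ((shiftFunctorAdd' C (j - 1) 1 j (by ring)).app Z)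
    (S.A_derived_projective _ (le_shift_of_le S.t _ hZ (by omega))) f

lemma projDimLE_A : ProjDimLE S.t S.A 0 :=
  fun _ hZ _ hj => S.hom_shift_eq_zero hZ hj

/-- `A` detects the aisle, since it generates and is derived projective. -/
lemma le_zero_of_forall_hom_eq_zero {X : C}
    (hX : ∀ j : ℤ, 1 ≤ j → ∀ f : S.A ⟶ X⟦j⟧, f = 0) : S.t.le 0 X := by
  obtain ⟨W, V, hW, hV, a, b, c, hT⟩ := S.t.exists_triangle_zero_one X
  have hV0 : IsZero V := S.generates V fun n => by
    have hA : ∀ g : S.A ⟶ V⟦-n⟧, g = 0 := by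
      intro g
      rcases le_or_gt 1 (-n) with hn | hn
      · let T := (Triangle.shiftFunctor C (-n)).obj (Triangle.mk a b c)
        obtain ⟨g', rfl⟩ := Triangle.coyoneda_exact₃ T (Triangle.shift_distinguished _ hT (-n))
          g (S.hom_shift_eq_zero (le_shift_of_le S.t _ hW le_rfl) (by omega) _)
        exact (congrArg (· ≫ T.mor₂) (hX _ hn g')).trans zero_comp
      · exact S.t.zero' g S.connective
          (S.t.ge_antitone (by omega) _ (S.t.ge_shift 1 (-n) (1 + n) (by ring) V hV))
    exact hom_eq_zero_of_iso ((shiftFunctorCompIsoId C (-n) n (neg_add_cancel n)).symm.app V)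
      (shift_hom_eq_zero n hA)
  have : IsIso a := (Triangle.isZero₃_iff_isIso₁ _ hT).1 hV0
  exact ((S.t.le 0).prop_iff_of_iso (asIso a)).1 hW

variable [HasFiniteBiproducts C]

lemma exists_inAdd_surjective (X : C) :
    ∃ (P : C) (q : P ⟶ X), inAdd S.A P ∧ ∀ g : S.A ⟶ X, ∃ h : S.A ⟶ P, h ≫ q = g := by
  have := S.homFinite S.A X
  let b := Module.finBasis k (S.A ⟶ X)
  refine ⟨_, biproduct.desc fun i => b i, inAdd_biproduct _ _,
    fun g => ⟨∑ i, b.repr g i • biproduct.ι (fun _ => S.A) i, ?_⟩⟩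
  simp [Preadditive.sum_comp, b.sum_repr]

lemma exists_distTriang_inAdd {X : C} (hX : S.t.le 0 X) :
    ∃ (M P : C) (u : M ⟶ P) (q : P ⟶ X) (e : X ⟶ M⟦(1 : ℤ)⟧),
      Triangle.mk u q e ∈ distTriang C ∧ inAdd S.A P ∧ S.t.le 0 M := by
  obtain ⟨P, q, hP, hq⟩ := S.exists_inAdd_surjective X
  obtain ⟨M, u, e, hT⟩ := distinguished_cocone_triangle₁ q
  have hPle : S.t.le 0 P := le_of_inAdd S.t hP S.connective
  refine ⟨M, P, u, q, e, hT, hP, S.le_zero_of_forall_hom_eq_zero fun j hj f => ?_⟩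
  obtain rfl | hj := hj.eq_or_lt
  · obtain ⟨g, rfl⟩ := Triangle.coyoneda_exact₃ _ (rot_of_distTriang _ hT) f
      (S.hom_shift_eq_zero hPle one_pos _)
    obtain ⟨h, rfl⟩ := hq g
    have hqe : q ≫ e = 0 := comp_distTriang_mor_zero₂₃ _ hT
    exact (assoc h q e).trans (by rw [hqe, comp_zero])
  · have hM : S.t.le 1 M := le_of_distTriang S.t _ (inv_rot_of_distTriang _ hT)
      (le_shift_of_le S.t _ hX (by omega)) (S.t.le_monotone zero_le_one _ hPle)
    exact S.hom_shift_eq_zero hM hj f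

lemma inAdd_of_projDimLE_zero {X : C} (hX : S.t.le 0 X) (h : ProjDimLE S.t X 0) :
    inAdd S.A X := by
  obtain ⟨M, P, u, q, e, hT, hP, hM⟩ := S.exists_distTriang_inAdd hX
  have he : e = 0 := h M hM 1 one_pos e
  obtain ⟨s, hs⟩ := Triangle.coyoneda_exact₃ _ hT (𝟙 X) ((id_comp _).trans he)
  exact hP.of_retract s q hs.symm

lemma projDimLE_of_mem_perInterval (n : ℕ) : ∀ X ∈ perInterval S.A n, ProjDimLE S.t X n :=
  perInterval_induction
    (fun i hi _ hX => ((S.projDimLE_A.shift i).of_inAdd hX).mono (by omega))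
    (fun T hT => ProjDimLE.of_distTriang T hT)

lemma exists_universal_map (n : ℕ) : ∀ X : C, S.t.le 0 X → ProjDimLE S.t X n →
    ∃ (N : C) (φ : X ⟶ N⟦(n : ℤ)⟧), inAdd S.A N ∧
      ∀ Z : C, S.t.le 0 Z → ∀ f : X ⟶ Z⟦(n : ℤ)⟧, ∃ g : N ⟶ Z, f = φ ≫ g⟦(n : ℤ)⟧' := by
  induction n with
  | zero =>
    intro X hX hpd
    refine ⟨X, (shiftFunctorZero C ℤ).inv.app X, S.inAdd_of_projDimLE_zero hX hpd,
      fun Z _ f => ⟨f ≫ (shiftFunctorZero C ℤ).hom.app Z, ?_⟩⟩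
    rw [← cancel_mono ((shiftFunctorZero C ℤ).hom.app Z), assoc]
    erw [(shiftFunctorZero C ℤ).hom.naturality]
    simp
  | succ n ih =>
    intro X hX hpd
    obtain ⟨M, P, u, q, e, hT, hP, hM⟩ := S.exists_distTriang_inAdd hX
    have hPpd : ProjDimLE S.t P 0 := S.projDimLE_A.of_inAdd hP
    obtain ⟨N, ψ, hN, hψ⟩ := ih M hM (ProjDimLE.fiber hT (hPpd.mono (by omega)) hpd)
    let ε := shiftFunctorAdd' C (n : ℤ) 1 ((n + 1 : ℕ) : ℤ) rfl
    refine ⟨N, e ≫ ψ⟦(1 : ℤ)⟧' ≫ ε.inv.app N, hN, fun Z hZ f => ?_⟩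
    -- `f` vanishes on `P`, so factors through `e`; its desuspension then factors through `ψ`
    obtain ⟨f₁, rfl⟩ : ∃ f₁ : M⟦(1 : ℤ)⟧ ⟶ Z⟦((n + 1 : ℕ) : ℤ)⟧, f = e ≫ f₁ :=
      Triangle.yoneda_exact₃ _ hT f (hPpd Z hZ _ (by omega) _)
    obtain ⟨g, hg⟩ := hψ Z hZ ((shiftFunctor C (1 : ℤ)).preimage (f₁ ≫ ε.hom.app Z))
    refine ⟨g, ?_⟩
    have hf₁ : f₁ = ψ⟦(1 : ℤ)⟧' ≫ (g⟦(n : ℤ)⟧')⟦(1 : ℤ)⟧' ≫ ε.inv.app Z := by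
      rw [← Functor.map_comp_assoc, ← hg, Functor.map_preimage, assoc, Iso.hom_inv_id_app,
        comp_id]
    have hε := ε.inv.naturality g
    simp only [Functor.comp_map] at hε
    rw [hf₁, hε]
    simp only [assoc]

lemma mem_perInterval_of_projDimLE (n : ℕ) :
    ∀ X : C, S.t.le 0 X → ProjDimLE S.t X n → X ∈ perInterval S.A n := by
  induction n with
  | zero =>
    intro X hX hpd
    exact (S.inAdd_of_projDimLE_zero hX hpd).of_iso ((shiftFunctorZero C ℤ).app S.A).symm
  | succ n ih =>
    intro X hX hpd
    obtain ⟨N, φ, hN, hφ⟩ := S.exists_universal_map (n + 1) X hX hpd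
    obtain ⟨Y, v, w, hT⟩ := distinguished_cocone_triangle₁ φ
    have hNpd : ProjDimLE S.t (N⟦((n + 1 : ℕ) : ℤ)⟧⟦(-1 : ℤ)⟧) n :=
      (((S.projDimLE_A.of_inAdd hN).shift _).shift (-1)).mono (by omega)
    have hYpd : ProjDimLE S.t Y n := ProjDimLE.fiber_of_factors hT hpd hNpd
      fun Z hZ f => let ⟨_, hg⟩ := hφ Z hZ f; ⟨_, hg⟩
    have hNle : S.t.le 0 (N⟦((n + 1 : ℕ) : ℤ)⟧⟦(-1 : ℤ)⟧) :=
      le_shift_of_le S.t _ (le_shift_of_le S.t _ (le_of_inAdd S.t hN S.connective) le_rfl)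
        (by omega)
    have hY : S.t.le 0 Y := le_of_distTriang S.t _ (inv_rot_of_distTriang _ hT) hNle hX
    exact mem_star _ hT (ih Y hY hYpd) (hN.map (shiftFunctor C _))

lemma exists_deflation (n : ℕ) {X : C} (hX : X ∈ perInterval S.A n) :
    ∃ (P : C) (_ : inAdd S.A P) (p : P ⟶ X), isDeflation (perInterval S.A n) p := by
  obtain ⟨M, P, u, q, e, hT, hP, hM⟩ :=
    S.exists_distTriang_inAdd (le_zero_of_mem_perInterval S.connective n X hX)
  have hMpd : ProjDimLE S.t M n := ProjDimLE.fiber hT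
    ((S.projDimLE_A.of_inAdd hP).mono (by omega))
    ((S.projDimLE_of_mem_perInterval n X hX).mono (by omega))
  exact ⟨P, hP, q, M, S.mem_perInterval_of_projDimLE n M hM hMpd, u, e, hT⟩

end DGSetup

variable {C : Type u} [Category.{v} C] [Preadditive C] [HasZeroObject C]
  [HasShift C ℤ] [∀ n : ℤ, (shiftFunctor C n).Additive] [Pretriangulated C]
  [HasFiniteBiproducts C] [HasBinaryBiproducts C]
  {k : Type w} [Field k] [Linear k C]

/-- `per(A)^{[-d,0]}` is a `(d-1)`-Auslander extriangulated category:
it has enough projectives and enough injectives, positive global dimension at most `d`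
(higher extensions `Hom(X, Y⟦k⟧)` vanish for `k > d`), and dominant dimension at least
`d`: each projective `P ∈ add(A)` has a minimal injective coresolution given by the
conflations `P⟦i⟧ ↣ 0 ↠ P⟦i+1⟧` (for `0 ≤ i < d`) and `P⟦d⟧ ↣ P⟦d⟧ ↠ 0`, whose first
`d` terms (the zero object) are projective-injective. -/
theorem stmt18 (S : DGSetup k C) (d : ℕ) (hd : 1 ≤ d) :
    -- enough projectives
    (∀ X ∈ perInterval S.A d, ∃ (P : C) (_ : inAdd S.A P) (p : P ⟶ X),
      isDeflation (perInterval S.A d) p) ∧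
    -- enough injectives
    (∀ X ∈ perInterval S.A d, ∃ (I : C) (_ : inAdd (S.A⟦(d : ℤ)⟧) I) (i : X ⟶ I),
      isInflation (perInterval S.A d) i) ∧
    -- positive global dimension at most d
    (∀ X ∈ perInterval S.A d, ∀ Y ∈ perInterval S.A d, ∀ k : ℤ, (d : ℤ) < k →
      ∀ f : X ⟶ Y⟦k⟧, f = 0) ∧
    -- the zero object is projective-injective
    projOn (perInterval S.A d) (0 : C) ∧ injOn (perInterval S.A d) (0 : C) ∧
    -- dominant dimension at least d, via the explicit minimal injective coresolution
    (∀ P : C, inAdd S.A P →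
      (∀ i : ℕ, i ≤ d → P⟦(i : ℤ)⟧ ∈ perInterval S.A d) ∧
      (∀ i : ℕ, i < d → ∃ h : P⟦(i : ℤ) + 1⟧ ⟶ (P⟦(i : ℤ)⟧)⟦(1 : ℤ)⟧,
        Triangle.mk (0 : P⟦(i : ℤ)⟧ ⟶ (0 : C)) (0 : (0 : C) ⟶ P⟦(i : ℤ) + 1⟧) h ∈
          distTriang C) ∧
      injOn (perInterval S.A d) (P⟦(d : ℤ)⟧)) := by
  obtain ⟨n, rfl⟩ : ∃ n, d = n + 1 := ⟨d - 1, by omega⟩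
  have hpd := S.projDimLE_of_mem_perInterval (n + 1)
  have hle := le_zero_of_mem_perInterval S.connective (n + 1)
  refine ⟨fun X hX => S.exists_deflation _ hX, fun X hX => exists_inflation S.A n hX,
    fun X hX Y hY j hj f => hpd X hX Y (hle Y hY) j hj f,
    fun X _ f => (isZero_zero C).eq_of_src f 0,
    fun X _ f => ((shiftFunctor C 1).map_isZero (isZero_zero C)).eq_of_tgt f 0,
    fun P hP => ⟨?_, ?_, ?_⟩⟩
  · exact fun i hi => perInterval_mono S.A hi (mem_perInterval_of_inAdd_shift S.A (hP.map _))
  · exact fun i _ => ⟨_, zero_distTriang_of_iso ((shiftFunctorAdd' C (i : ℤ) 1 _ rfl).app P)⟩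
  · exact fun X hX f => hom_eq_zero_of_iso ((shiftFunctorAdd' C _ 1 _ rfl).symm.app P)
      (hpd X hX P (le_of_inAdd S.t hP S.connective) _ (by omega)) f

end Paper
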